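/- Let n, k be positive integers with k ≤ n and let A : ℝ → ℂ^{n×n} be continuous. Suppose Q : ℝ → ℂ^{n×k} is continuously differentiable and satisfies the Drury–Oja flow Q'(x) = (I_n − Q(x)·Q(x)^†)·A(x)·Q(x), and suppose that at some x₀ ∈ ℝ the columns of Q(x₀) are orthonormal, i.e. Q(x₀)^†·Q(x₀) = I_k. Then Q(x)^†·Q(x) = I_k for all x ∈ ℝ; that is, the Drury–Oja flow preserves orthonormality of the frame. -/

import Mathlib

/-!
The Gram defect `G = Q†Q - I` satisfies the linear matrix ODE
`G' = -(Q†A†Q) G - G (Q†AQ)`, whose coefficients are continuous because `Q` is.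
Since `G(x₀) = 0`, uniqueness of solutions of linear ODEs with continuous coefficients
(Grönwall, with a Lipschitz constant taken on a compact interval) forces `G ≡ 0`.
-/

open Matrix

/-- Entrywise derivative of a matrix-valued function of a real variable. -/
def MHasDerivAt {m k : Type*} (f : ℝ → Matrix m k ℂ) (f' : Matrix m k ℂ) (x : ℝ) : Prop :=
  ∀ i j, HasDerivAt (fun t => f t i j) (f' i j) x

open Set in
theorem ODE_linear_eq_zero_of_eq_zero {E : Type*} [NormedAddCommGroup E] [NormedSpace ℝ E]
    {L : ℝ → E →L[ℝ] E} (hL : Continuous L) {f : ℝ → E}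
    (hf : ∀ t, HasDerivAt f (L t (f t)) t) {t₀ : ℝ} (h₀ : f t₀ = 0) (t : ℝ) : f t = 0 := by
  set a := min t t₀ - 1
  set b := max t t₀ + 1
  obtain ⟨K, hK⟩ : BddAbove ((fun s => ‖L s‖₊) '' Icc a b) :=
    (isCompact_Icc.image (continuous_nnnorm.comp hL)).bddAbove
  have hLip : ∀ s ∈ Ioo a b, LipschitzOnWith K (L s) univ := fun s hs =>
    ((L s).lipschitz.weaken (hK ⟨s, Ioo_subset_Icc_self hs, rfl⟩)).lipschitzOnWith
  have hzero : ∀ s ∈ Ioo a b, HasDerivAt (fun _ => (0 : E)) (L s 0) s := fun s _ => by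
    simpa using hasDerivAt_const s (0 : E)
  refine ODE_solution_unique_of_mem_Icc hLip ?_
    (fun s _ => (hf s).continuousAt.continuousWithinAt) (fun s _ => hf s) (fun _ _ => mem_univ _)
    continuousOn_const hzero (fun _ _ => mem_univ _) h₀ ?_
  · constructor <;> linarith [min_le_right t t₀, le_max_right t t₀]
  · constructor <;> linarith [min_le_left t t₀, le_max_left t t₀]

namespace MHasDerivAt

variable {l m p : Type*} {x : ℝ}

theorem continuous {f : ℝ → Matrix m p ℂ} {f' : ℝ → Matrix m p ℂ}
    (hf : ∀ x, MHasDerivAt f (f' x) x) : Continuous f :=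
  continuous_matrix fun i j => continuous_iff_continuousAt.2 fun x => (hf x i j).continuousAt

theorem sub_const {f : ℝ → Matrix m p ℂ} {f' : Matrix m p ℂ} (hf : MHasDerivAt f f' x)
    (c : Matrix m p ℂ) : MHasDerivAt (fun t => f t - c) f' x :=
  fun i j => (hf i j).sub_const (c i j)

theorem conjTranspose {f : ℝ → Matrix m p ℂ} {f' : Matrix m p ℂ} (hf : MHasDerivAt f f' x) :
    MHasDerivAt (fun t => (f t)ᴴ) f'ᴴ x :=
  fun i j => (hf j i).star

theorem mul [Fintype m] {f : ℝ → Matrix l m ℂ} {g : ℝ → Matrix m p ℂ} {f' : Matrix l m ℂ}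
    {g' : Matrix m p ℂ} (hf : MHasDerivAt f f' x) (hg : MHasDerivAt g g' x) :
    MHasDerivAt (fun t => f t * g t) (f' * g x + f x * g') x := by
  intro i j
  simp only [Matrix.add_apply, mul_apply, ← Finset.sum_add_distrib]
  exact HasDerivAt.fun_sum fun r _ => (hf i r).fun_mul (hg r j)

end MHasDerivAt

section linftyOp

/- Any norm would do; the ℓ∞ operator norm makes square matrices a normed algebra, so that
`M ↦ B t * M + M * C t` is a continuous linear map depending continuously on `t`. -/
attribute [local instance] Matrix.linftyOpNormedAddCommGroup Matrix.linftyOpNormedSpace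
  Matrix.linftyOpNormedRing Matrix.linftyOpNormedAlgebra

variable {m p : Type*} [Fintype m] [DecidableEq m]

theorem MHasDerivAt.hasDerivAt [Fintype p] [DecidableEq p] {f : ℝ → Matrix m p ℂ}
    {f' : Matrix m p ℂ} {x : ℝ} (hf : MHasDerivAt f f' x) : HasDerivAt f f' x := by
  have h := HasDerivAt.fun_sum fun i (_ : i ∈ Finset.univ) => HasDerivAt.fun_sum
    fun j (_ : j ∈ Finset.univ) => (hf i j).smul_const (single i j (1 : ℂ))
  simp only [smul_single, smul_eq_mul, mul_one, ← matrix_eq_sum_single] at h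
  exact h

theorem sylvester_ODE_eq_zero_of_eq_zero {B C G : ℝ → Matrix m m ℂ} (hB : Continuous B)
    (hC : Continuous C) (hG : ∀ t, MHasDerivAt G (B t * G t + G t * C t) t) {t₀ : ℝ}
    (h₀ : G t₀ = 0) (t : ℝ) : G t = 0 := by
  let L : ℝ → Matrix m m ℂ →L[ℝ] Matrix m m ℂ := fun s =>
    ContinuousLinearMap.mul ℝ _ (B s) + (ContinuousLinearMap.mul ℝ _).flip (C s)
  have hL : Continuous L := by fun_prop
  exact ODE_linear_eq_zero_of_eq_zero hL (fun s => (hG s).hasDerivAt) h₀ t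

end linftyOp

theorem druryOja_gram_deriv_eq {R m k : Type*} [CommRing R] [StarRing R] [Fintype m]
    [Fintype k] [DecidableEq m] [DecidableEq k] (M : Matrix m k R) (A : Matrix m m R) :
    ((1 - M * Mᴴ) * A * M)ᴴ * M + Mᴴ * ((1 - M * Mᴴ) * A * M)
      = -(Mᴴ * Aᴴ * M) * (Mᴴ * M - 1) + (Mᴴ * M - 1) * -(Mᴴ * A * M) := by
  simp only [conjTranspose_mul, conjTranspose_sub, conjTranspose_conjTranspose,
    Matrix.sub_mul, Matrix.mul_sub, Matrix.one_mul, Matrix.mul_one, Matrix.mul_assoc,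
    Matrix.neg_mul, Matrix.mul_neg]
  abel

theorem drury_oja_preserves_orthonormality_general
    (n k : ℕ)
    (A : ℝ → Matrix (Fin n) (Fin n) ℂ) (hA : Continuous A)
    (Q : ℝ → Matrix (Fin n) (Fin k) ℂ)
    (hQ : ∀ x, MHasDerivAt Q ((1 - Q x * (Q x)ᴴ) * A x * Q x) x)
    (x₀ : ℝ) (hQ0 : (Q x₀)ᴴ * Q x₀ = 1) :
    ∀ x : ℝ, (Q x)ᴴ * Q x = 1 := by
  have hQc : Continuous Q := MHasDerivAt.continuous hQ
  intro x
  refine sub_eq_zero.mp <| sylvester_ODE_eq_zero_of_eq_zero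
    (B := fun t => -((Q t)ᴴ * (A t)ᴴ * Q t)) (C := fun t => -((Q t)ᴴ * A t * Q t))
    (G := fun t => (Q t)ᴴ * Q t - 1) ?_ ?_ (fun t => ?_) (sub_eq_zero.mpr hQ0) x
  · exact ((hQc.matrix_conjTranspose.matrix_mul hA.matrix_conjTranspose).matrix_mul hQc).neg
  · exact ((hQc.matrix_conjTranspose.matrix_mul hA).matrix_mul hQc).neg
  · rw [← druryOja_gram_deriv_eq]
    exact ((hQ t).conjTranspose.mul (hQ t)).sub_const 1

/-- The Drury–Oja flow `Q' = (I − Q·Q†)·A·Q` preserves orthonormality of the frame: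
if `Q(x₀)†·Q(x₀) = I` at some point `x₀`, then `Q(x)†·Q(x) = I` for all `x`. -/
theorem drury_oja_preserves_orthonormality
    (n k : ℕ) (hn : 0 < n) (hk : 0 < k) (hkn : k ≤ n)
    (A : ℝ → Matrix (Fin n) (Fin n) ℂ) (hA : Continuous A)
    (Q : ℝ → Matrix (Fin n) (Fin k) ℂ)
    (hQ : ∀ x, MHasDerivAt Q ((1 - Q x * (Q x)ᴴ) * A x * Q x) x)
    (hQcont : Continuous fun x => (1 - Q x * (Q x)ᴴ) * A x * Q x)
    (x₀ : ℝ) (hQ0 : (Q x₀)ᴴ * Q x₀ = 1) :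
    ∀ x : ℝ, (Q x)ᴴ * Q x = 1 :=
  drury_oja_preserves_orthonormality_general n k A hA Q hQ x₀ hQ0
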